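/- arXiv:2505.15990 — 3 statements merged into one kernel-verified Lean document; each statement's English description precedes it below -/
import Mathlib

section
/- In a Nelson algebra, the conditions (NT3): ((x→z)→y)→(((y→x)→y)→y)=1 for all x,y,z, and (FN1): y ∨ ¬x ∨ (y→x)=1 for all x,y (where ¬x := x→0), are equivalent. -/
/-- A Nelson algebra: a distributive lattice (axioms N1, N2) with a De Morgan
involution `tilde` (N3, N4), the Kleene condition (N5), and a weak implication
`imp` satisfying (N6)-(N8). -/
class NelsonAlgebra (N : Type*) extends DistribLattice N where
  one : N
  tilde : N → N
  imp : N → N → N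
  tilde_tilde : ∀ x : N, tilde (tilde x) = x
  tilde_sup : ∀ x y : N, tilde (x ⊔ y) = tilde x ⊓ tilde y
  kleene : ∀ x y : N, x ⊓ tilde x = (x ⊓ tilde x) ⊓ (y ⊔ tilde y)
  imp_self : ∀ x : N, imp x x = one
  imp_imp : ∀ x y z : N, imp x (imp y z) = imp (x ⊓ y) z
  inf_imp : ∀ x y : N, x ⊓ imp x y = x ⊓ (tilde x ⊔ y)

open NelsonAlgebra

section Aux

variable {N : Type*} [NelsonAlgebra N]

private lemma le_one' (a : N) : a ≤ one := by
  have h := NelsonAlgebra.inf_imp a a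
  rw [NelsonAlgebra.imp_self] at h
  have h2 : a ⊓ one = a := by rw [h]; exact inf_eq_left.mpr le_sup_right
  exact inf_eq_left.mp h2

private lemma inf_one (a : N) : a ⊓ one = a := inf_eq_left.mpr (le_one' a)

private lemma tilde_anti {a b : N} (h : a ≤ b) : tilde b ≤ tilde a := by
  have h1 := NelsonAlgebra.tilde_sup a b
  rw [sup_eq_right.mpr h] at h1
  rw [h1]; exact inf_le_left

private lemma tilde_inf (x y : N) : tilde (x ⊓ y) = tilde x ⊔ tilde y := by
  have h := NelsonAlgebra.tilde_sup (tilde x) (tilde y)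
  rw [NelsonAlgebra.tilde_tilde, NelsonAlgebra.tilde_tilde] at h
  calc tilde (x ⊓ y) = tilde (tilde (tilde x ⊔ tilde y)) := by rw [h]
    _ = tilde x ⊔ tilde y := NelsonAlgebra.tilde_tilde _

private lemma bot' (a : N) : tilde one ≤ a := by
  have h2 := tilde_anti (le_one' (tilde a))
  rwa [NelsonAlgebra.tilde_tilde] at h2

private lemma one_imp (a : N) : imp one a = a := by
  have h := NelsonAlgebra.inf_imp one a
  rw [inf_eq_right.mpr (le_one' (imp one a)),
      sup_eq_right.mpr (bot' a),
      inf_eq_right.mpr (le_one' a)] at h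
  exact h

private lemma kleene_le (p q : N) : p ⊓ tilde p ≤ q ⊔ tilde q :=
  inf_eq_left.mp (NelsonAlgebra.kleene p q).symm

private lemma imp_eq_one_of_le' {a b : N} (h : a ≤ tilde a ⊔ b) : imp a b = one := by
  have hau : a ⊓ imp a b = a := by rw [NelsonAlgebra.inf_imp]; exact inf_eq_left.mpr h
  have h2 : imp (imp a b) (imp a b) = imp a b := by
    conv_lhs => rw [NelsonAlgebra.imp_imp]
    rw [inf_comm (imp a b) a, hau]
  rw [NelsonAlgebra.imp_self] at h2
  exact h2.symm

private lemma le_of_imp_eq_one {a b : N} (h : imp a b = one) : a ≤ tilde a ⊔ b := by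
  have h2 := NelsonAlgebra.inf_imp a b
  rw [h, inf_one] at h2
  exact inf_eq_left.mp h2.symm

private lemma le_imp' {a b : N} (h : a ≤ b) : imp a b = one :=
  imp_eq_one_of_le' (h.trans le_sup_right)

private lemma imp_trans' {a b c : N} (h1 : imp a b = one) (h2 : imp b c = one) :
    imp a c = one := by
  have g1 := le_of_imp_eq_one h1
  have g2 := le_of_imp_eq_one h2
  apply imp_eq_one_of_le'
  have hab : a ⊓ tilde b ≤ tilde a := by
    have h3 := tilde_anti g1
    rwa [NelsonAlgebra.tilde_sup, NelsonAlgebra.tilde_tilde] at h3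
  have hb : a ⊓ b ≤ tilde a ⊔ c := by
    calc a ⊓ b = a ⊓ (b ⊓ (tilde b ⊔ c)) := by rw [inf_eq_left.mpr g2]
      _ = a ⊓ (b ⊓ tilde b ⊔ b ⊓ c) := by rw [inf_sup_left]
      _ = a ⊓ (b ⊓ tilde b) ⊔ a ⊓ (b ⊓ c) := inf_sup_left a _ _
      _ ≤ tilde a ⊔ c :=
        sup_le (((inf_le_inf_left a inf_le_right).trans hab).trans le_sup_left)
          ((inf_le_right.trans inf_le_right).trans le_sup_right)
  calc a = a ⊓ (tilde a ⊔ b) := (inf_eq_left.mpr g1).symm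
    _ = a ⊓ tilde a ⊔ a ⊓ b := inf_sup_left a _ _
    _ ≤ tilde a ⊔ c := sup_le (inf_le_right.trans le_sup_left) hb

private lemma aux_key {p q r : N} (g1 : p ≤ tilde p ⊔ r) (g2 : q ≤ tilde q ⊔ r) :
    p ≤ tilde p ⊓ tilde q ⊔ r := by
  have h5 : p ⊓ tilde p ⊓ q ≤ tilde p ⊓ tilde q ⊔ r := by
    calc p ⊓ tilde p ⊓ q = p ⊓ tilde p ⊓ (q ⊓ (tilde q ⊔ r)) := by rw [inf_eq_left.mpr g2]
      _ = p ⊓ tilde p ⊓ (q ⊓ tilde q ⊔ q ⊓ r) := by rw [inf_sup_left]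
      _ = p ⊓ tilde p ⊓ (q ⊓ tilde q) ⊔ p ⊓ tilde p ⊓ (q ⊓ r) := inf_sup_left _ _ _
      _ ≤ tilde p ⊓ tilde q ⊔ r :=
        sup_le ((le_inf (inf_le_left.trans inf_le_right)
            (inf_le_right.trans inf_le_right)).trans le_sup_left)
          ((inf_le_right.trans inf_le_right).trans le_sup_right)
  have hk : p ⊓ tilde p ≤ tilde p ⊓ tilde q ⊔ r := by
    calc p ⊓ tilde p = p ⊓ tilde p ⊓ (q ⊔ tilde q) :=
          (inf_eq_left.mpr (kleene_le p q)).symm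
      _ = p ⊓ tilde p ⊓ q ⊔ p ⊓ tilde p ⊓ tilde q := inf_sup_left _ _ _
      _ ≤ tilde p ⊓ tilde q ⊔ r :=
        sup_le h5 ((inf_le_inf_right (tilde q) inf_le_right).trans le_sup_left)
  calc p = p ⊓ (tilde p ⊔ r) := (inf_eq_left.mpr g1).symm
    _ = p ⊓ tilde p ⊔ p ⊓ r := inf_sup_left p _ _
    _ ≤ tilde p ⊓ tilde q ⊔ r := sup_le hk (inf_le_right.trans le_sup_right)

private lemma imp_sup' {p q r : N} (h1 : imp p r = one) (h2 : imp q r = one) :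
    imp (p ⊔ q) r = one := by
  have g1 := le_of_imp_eq_one h1
  have g2 := le_of_imp_eq_one h2
  apply imp_eq_one_of_le'
  rw [NelsonAlgebra.tilde_sup]
  exact sup_le (aux_key g1 g2)
    ((aux_key g2 g1).trans (sup_le_sup_right (inf_comm (tilde q) (tilde p)).le r))

private lemma imp_inf' {a b c : N} (h1 : imp a b = one) (h2 : imp a c = one) :
    imp a (b ⊓ c) = one := by
  apply imp_eq_one_of_le'
  exact (le_inf (le_of_imp_eq_one h1) (le_of_imp_eq_one h2)).trans
    (sup_inf_left (tilde a) b c).symm.le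

private lemma p3 (s y : N) : imp (s ⊓ imp s y) y = one := by
  apply imp_eq_one_of_le'
  have h1 : s ⊓ imp s y ≤ tilde s ⊔ y := by rw [NelsonAlgebra.inf_imp]; exact inf_le_right
  exact h1.trans (sup_le_sup_right (tilde_anti inf_le_left) y)

private lemma k' (a b : N) : imp (a ⊓ tilde a) b = one := by
  apply imp_eq_one_of_le'
  rw [tilde_inf]
  exact inf_le_right.trans (le_sup_left.trans le_sup_left)

end Aux

theorem nt3_iff_fn1 {N : Type*} [NelsonAlgebra N] :
    (∀ x y z : N,
        imp (imp (imp x z) y) (imp (imp (imp y x) y) y) = NelsonAlgebra.one) ↔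
    (∀ x y : N,
        y ⊔ imp x (tilde NelsonAlgebra.one) ⊔ imp y x = NelsonAlgebra.one) := by
  constructor
  · intro h x y
    set u : N := y ⊔ imp x (tilde NelsonAlgebra.one) ⊔ imp y x with hu
    have hnx : imp x (tilde NelsonAlgebra.one) ≤ u := le_sup_right.trans le_sup_left
    have ht : imp y x ≤ u := le_sup_right
    have hy : y ≤ u := le_sup_left.trans le_sup_left
    have h1 := h x u (tilde NelsonAlgebra.one)
    rw [le_imp' hnx, one_imp] at h1
    have hv : imp (imp u x) u = one := by
      have hvt : imp (imp u x) (imp y x) = one := by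
        rw [NelsonAlgebra.imp_imp]
        apply imp_eq_one_of_le'
        have e1 : imp u x ⊓ y ≤ tilde u ⊔ x := by
          calc imp u x ⊓ y ≤ imp u x ⊓ u := inf_le_inf_left _ hy
            _ = u ⊓ imp u x := inf_comm _ _
            _ = u ⊓ (tilde u ⊔ x) := NelsonAlgebra.inf_imp u x
            _ ≤ tilde u ⊔ x := inf_le_right
        exact e1.trans (sup_le_sup_right (tilde_anti (inf_le_right.trans hy)) x)
      exact imp_trans' hvt (le_imp' ht)
    rw [hv, one_imp] at h1
    exact h1
  · intro h x y z
    rw [NelsonAlgebra.imp_imp]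
    have hsplit : imp (imp x z) y ⊓ imp (imp y x) y =
        (imp (imp x z) y ⊓ imp (imp y x) y ⊓ y ⊔
          imp (imp x z) y ⊓ imp (imp y x) y ⊓ imp x (tilde NelsonAlgebra.one)) ⊔
          imp (imp x z) y ⊓ imp (imp y x) y ⊓ imp y x := by
      calc imp (imp x z) y ⊓ imp (imp y x) y
          = imp (imp x z) y ⊓ imp (imp y x) y ⊓ one := (inf_one _).symm
        _ = imp (imp x z) y ⊓ imp (imp y x) y ⊓
              (y ⊔ imp x (tilde NelsonAlgebra.one) ⊔ imp y x) := by rw [h x y]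
        _ = _ := by rw [inf_sup_left, inf_sup_left]
    rw [hsplit]
    apply imp_sup' (imp_sup' ?_ ?_) ?_
    · exact le_imp' inf_le_right
    · have h1 : imp (imp x (tilde NelsonAlgebra.one)) (imp x z) = one := by
        rw [NelsonAlgebra.imp_imp]
        have h0 : imp x (tilde NelsonAlgebra.one) ⊓ x = x ⊓ tilde x := by
          rw [inf_comm, NelsonAlgebra.inf_imp, sup_eq_left.mpr (bot' (tilde x))]
        rw [h0]
        exact k' x z
      have h2 : imp (imp (imp x z) y ⊓ imp (imp y x) y ⊓ imp x (tilde NelsonAlgebra.one))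
          (imp x z ⊓ imp (imp x z) y) = one := by
        apply imp_inf'
        · exact imp_trans' (le_imp' inf_le_right) h1
        · exact le_imp' (inf_le_left.trans inf_le_left)
      exact imp_trans' h2 (p3 (imp x z) y)
    · have h3 : imp (imp x z) y ⊓ imp (imp y x) y ⊓ imp y x ≤
          imp y x ⊓ imp (imp y x) y :=
        le_inf inf_le_right (inf_le_left.trans inf_le_right)
      exact imp_trans' (le_imp' h3) (p3 (imp y x) y)
end

section
/- In a Nelson algebra, the identity y = (¬x → y) ∧ ((y→x)→y) (for all x,y, where ¬x := x→0) is equivalent to the identity ((y→x)→y) → ((¬x→y)→y) = 1 (for all x,y). -/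
open NelsonAlgebra

namespace NelsonAux

variable {N : Type*} [NelsonAlgebra N]

lemma tilde_inf (x y : N) : tilde (x ⊓ y) = tilde x ⊔ tilde y := by
  have h := NelsonAlgebra.tilde_sup (tilde x) (tilde y)
  rw [NelsonAlgebra.tilde_tilde, NelsonAlgebra.tilde_tilde] at h
  rw [← h, NelsonAlgebra.tilde_tilde]

lemma tilde_le_tilde {x y : N} (h : x ≤ y) : tilde y ≤ tilde x := by
  have h1 : x ⊔ y = y := sup_eq_right.mpr h
  calc tilde y = tilde (x ⊔ y) := by rw [h1]
    _ = tilde x ⊓ tilde y := NelsonAlgebra.tilde_sup x y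
    _ ≤ tilde x := inf_le_left

lemma inf_one (x : N) : x ⊓ (one : N) = x := by
  have h := NelsonAlgebra.inf_imp x x
  rw [NelsonAlgebra.imp_self] at h
  rw [h]
  exact inf_eq_left.mpr le_sup_right

/-- Weak modus ponens generator: if `A ≤ ∼A ⊔ B` then `A → B = 1`. -/
lemma wmp {A B : N} (h : A ≤ tilde A ⊔ B) : imp A B = one := by
  have h1 : A ⊓ imp A B = A := by
    rw [NelsonAlgebra.inf_imp]; exact inf_eq_left.mpr h
  have h2 := NelsonAlgebra.imp_self (imp A B)
  rw [NelsonAlgebra.imp_imp] at h2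
  rw [inf_comm (imp A B) A, h1] at h2
  exact h2

lemma imp_eq_one_inf {A B : N} (h : imp A B = one) :
    A ⊓ (tilde A ⊔ B) = A := by
  rw [← NelsonAlgebra.inf_imp, h, inf_one]

/-- F9: from `A → B = 1` we get `A = (A ⊓ ∼A) ⊔ (A ⊓ B)`. -/
lemma f9 {A B : N} (h : imp A B = one) :
    A = (A ⊓ tilde A) ⊔ (A ⊓ B) := by
  calc A = A ⊓ (tilde A ⊔ B) := (imp_eq_one_inf h).symm
    _ = (A ⊓ tilde A) ⊔ (A ⊓ B) := inf_sup_left A (tilde A) B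

/-- From `A → B = 1` we get `A ⊓ ∼B ≤ ∼A`. -/
lemma f5of1 {A B : N} (h : imp A B = one) : A ⊓ tilde B ≤ tilde A := by
  have h0 := congrArg tilde (imp_eq_one_inf h).symm
  rw [tilde_inf, NelsonAlgebra.tilde_sup, NelsonAlgebra.tilde_tilde] at h0
  exact sup_eq_left.mp h0.symm

lemma inf_le_imp (v y : N) : v ⊓ y ≤ imp v y := by
  have h := NelsonAlgebra.inf_imp v y
  calc v ⊓ y ≤ v ⊓ (tilde v ⊔ y) := inf_le_inf_left v le_sup_right
    _ = v ⊓ imp v y := h.symm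
    _ ≤ imp v y := inf_le_right

lemma small_le_imp (v y : N) : y ⊓ tilde y ≤ imp v y := by
  have hV : (v ⊔ (y ⊓ tilde y)) ⊓ v = v := inf_eq_right.mpr le_sup_left
  have e1 : imp (v ⊔ (y ⊓ tilde y)) (imp v y) = imp v y := by
    rw [NelsonAlgebra.imp_imp, hV]
  have e2 := NelsonAlgebra.inf_imp (v ⊔ (y ⊓ tilde y)) (imp v y)
  rw [e1] at e2
  have e3 : (v ⊔ (y ⊓ tilde y)) ⊓ tilde (v ⊔ (y ⊓ tilde y)) ≤ imp v y := by
    have h4 : (v ⊔ (y ⊓ tilde y)) ⊓ tilde (v ⊔ (y ⊓ tilde y)) ≤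
        (v ⊔ (y ⊓ tilde y)) ⊓ imp v y := by
      rw [e2]; exact inf_le_inf_left _ le_sup_left
    exact h4.trans inf_le_right
  have p2 : (y ⊓ tilde y) ⊓ tilde v ≤ imp v y := by
    refine le_trans (le_inf ?_ ?_) e3
    · exact inf_le_left.trans le_sup_right
    · rw [NelsonAlgebra.tilde_sup, tilde_inf, NelsonAlgebra.tilde_tilde]
      exact le_inf inf_le_right
        (inf_le_left.trans (inf_le_right.trans le_sup_left))
  have p1 : (y ⊓ tilde y) ⊓ v ≤ imp v y := by
    refine le_trans (le_inf ?_ ?_) (inf_le_imp v y)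
    · exact inf_le_right
    · exact inf_le_left.trans inf_le_left
  calc y ⊓ tilde y = (y ⊓ tilde y) ⊓ (v ⊔ tilde v) := NelsonAlgebra.kleene y v
    _ = ((y ⊓ tilde y) ⊓ v) ⊔ ((y ⊓ tilde y) ⊓ tilde v) :=
        inf_sup_left (y ⊓ tilde y) v (tilde v)
    _ ≤ imp v y := sup_le p1 p2

lemma le_imp (v y : N) : y ≤ imp v y := by
  have h1 : imp y (imp v y) = one := by
    rw [NelsonAlgebra.imp_imp]
    exact wmp (inf_le_left.trans le_sup_right)
  have h2 := f9 h1
  calc y = (y ⊓ tilde y) ⊔ (y ⊓ imp v y) := h2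
    _ ≤ imp v y := sup_le (small_le_imp v y) inf_le_right

/-- Normality: `∼y → (y → x) = 1`. -/
lemma norm1 (x y : N) : imp (tilde y) (imp y x) = one := by
  rw [NelsonAlgebra.imp_imp]
  apply wmp
  have ht : tilde (tilde y ⊓ y) = y ⊔ tilde y := by
    rw [tilde_inf, NelsonAlgebra.tilde_tilde]
  rw [ht]
  exact le_trans inf_le_right (le_trans le_sup_left le_sup_left)

lemma norm2 (x y : N) : tilde y ⊓ tilde (imp y x) ≤ y := by
  have h := f5of1 (norm1 x y)
  rwa [NelsonAlgebra.tilde_tilde] at h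

lemma norm3 (x y : N) : tilde y ≤ y ⊔ imp y x := by
  have h := f9 (norm1 x y)
  rw [NelsonAlgebra.tilde_tilde] at h
  calc tilde y = (tilde y ⊓ y) ⊔ (tilde y ⊓ imp y x) := h
    _ ≤ y ⊔ imp y x := sup_le_sup inf_le_right inf_le_right

/-- Key inequality: `((y→x)→y) ⊓ ∼y ≤ y`. -/
lemma qstar (x y : N) : imp (imp y x) y ⊓ tilde y ≤ y := by
  have h3 : tilde y ≤ y ⊔ imp y x := norm3 x y
  have h6 := NelsonAlgebra.inf_imp (imp y x) y
  have h5 : imp (imp y x) y ⊓ (imp y x ⊓ tilde y) ≤ y := by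
    calc imp (imp y x) y ⊓ (imp y x ⊓ tilde y)
        = (imp (imp y x) y ⊓ imp y x) ⊓ tilde y := by rw [inf_assoc]
      _ = (imp y x ⊓ imp (imp y x) y) ⊓ tilde y := by
          rw [inf_comm (imp (imp y x) y) (imp y x)]
      _ = (imp y x ⊓ (tilde (imp y x) ⊔ y)) ⊓ tilde y := by rw [h6]
      _ ≤ (tilde (imp y x) ⊔ y) ⊓ tilde y := inf_le_inf_right _ inf_le_right
      _ = (tilde (imp y x) ⊓ tilde y) ⊔ (y ⊓ tilde y) :=
          inf_sup_right (tilde (imp y x)) y (tilde y)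
      _ ≤ y := sup_le
          (by rw [inf_comm (tilde (imp y x)) (tilde y)]; exact norm2 x y)
          inf_le_left
  calc imp (imp y x) y ⊓ tilde y
      ≤ imp (imp y x) y ⊓ ((y ⊔ imp y x) ⊓ tilde y) :=
        inf_le_inf_left _ (le_inf h3 le_rfl)
    _ = imp (imp y x) y ⊓ ((y ⊓ tilde y) ⊔ (imp y x ⊓ tilde y)) := by
        rw [inf_sup_right y (imp y x) (tilde y)]
    _ = (imp (imp y x) y ⊓ (y ⊓ tilde y)) ⊔
          (imp (imp y x) y ⊓ (imp y x ⊓ tilde y)) :=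
        inf_sup_left (imp (imp y x) y) (y ⊓ tilde y) (imp y x ⊓ tilde y)
    _ ≤ y := sup_le (inf_le_right.trans inf_le_left) h5

lemma main_aux {a b y : N} (ha : y ≤ a) (hb : y ≤ b)
    (H : imp (a ⊓ b) y = one) (hq : b ⊓ tilde y ≤ y) : y = a ⊓ b := by
  have hyr : y ≤ a ⊓ b := le_inf ha hb
  have hf := f9 H
  have hs : (a ⊓ b) ⊓ tilde (a ⊓ b) ≤ y := by
    have h1 : tilde (a ⊓ b) ≤ tilde y := tilde_le_tilde hyr
    exact (inf_le_inf inf_le_right h1).trans hq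
  have hle : a ⊓ b ≤ y := by
    calc a ⊓ b = ((a ⊓ b) ⊓ tilde (a ⊓ b)) ⊔ ((a ⊓ b) ⊓ y) := hf
      _ ≤ y := sup_le hs inf_le_right
  exact le_antisymm hyr hle

end NelsonAux

open NelsonAux in
theorem fn3_iff_fn4 {N : Type*} [NelsonAlgebra N] :
    (∀ x y : N,
        y = imp (imp x (tilde NelsonAlgebra.one)) y ⊓ imp (imp y x) y) ↔
    (∀ x y : N,
        imp (imp (imp y x) y) (imp (imp (imp x (tilde NelsonAlgebra.one)) y) y)
          = NelsonAlgebra.one) := by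
  constructor
  · intro h x y
    rw [NelsonAlgebra.imp_imp, inf_comm (imp (imp y x) y) (imp (imp x (tilde one)) y),
      ← h x y]
    exact NelsonAlgebra.imp_self y
  · intro h x y
    have H0 := h x y
    rw [NelsonAlgebra.imp_imp, inf_comm (imp (imp y x) y) (imp (imp x (tilde one)) y)]
      at H0
    exact main_aux (le_imp _ y) (le_imp _ y) H0 (qstar x y)
end

section
/- If M is a maximal deductive system of a Nelson algebra N and x ∉ M, then x→y ∈ M for every y ∈ N. -/
open NelsonAlgebra

/-- A deductive system: contains 1 and is closed under modus ponens. -/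
def IsDeductiveSystem {N : Type*} [NelsonAlgebra N] (D : Set N) : Prop :=
  NelsonAlgebra.one ∈ D ∧ ∀ x y : N, x ∈ D → imp x y ∈ D → y ∈ D

namespace NelsonAux

variable {N : Type*} [NelsonAlgebra N]

/-- De Morgan for meets, derived from `tilde_sup` and the involution. -/
lemma tilde_inf_s10 (a b : N) : tilde (a ⊓ b) = tilde a ⊔ tilde b := by
  have h := tilde_sup (tilde a) (tilde b)
  rw [tilde_tilde, tilde_tilde] at h
  rw [← h, tilde_tilde]

/-- `one` is the top element. -/
lemma le_one (a : N) : a ≤ (one : N) := by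
  have h := NelsonAlgebra.inf_imp a a
  rw [NelsonAlgebra.imp_self] at h
  have h2 : a ⊓ (tilde a ⊔ a) = a := inf_eq_left.mpr le_sup_right
  exact inf_eq_left.mp (h.trans h2)

/-- Master rule: if `h ≤ ~h ⊔ w` then `imp h w = 1`. -/
lemma master {h w : N} (hle : h ≤ tilde h ⊔ w) : imp h w = one := by
  have e1 : imp h w ⊓ h = h := by
    rw [inf_comm, NelsonAlgebra.inf_imp]
    exact inf_eq_left.mpr hle
  have e2 : imp (imp h w ⊓ h) w = one := by
    rw [← NelsonAlgebra.imp_imp]; exact NelsonAlgebra.imp_self _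
  rw [← e2, e1]

lemma imp_one (a : N) : imp a (one : N) = one :=
  master ((le_one a).trans le_sup_right)

variable {M : Set N}

lemma mem_of_imp_one (hM : IsDeductiveSystem M) {a b : N}
    (h : imp a b = one) (ha : a ∈ M) : b ∈ M :=
  hM.2 a b ha (by rw [h]; exact hM.1)

lemma mem_of_le (hM : IsDeductiveSystem M) {a b : N} (ha : a ∈ M) (hab : a ≤ b) :
    b ∈ M :=
  mem_of_imp_one hM (master (hab.trans le_sup_right)) ha

lemma inf_mem (hM : IsDeductiveSystem M) {a b : N} (ha : a ∈ M) (hb : b ∈ M) :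
    a ⊓ b ∈ M := by
  have h : imp a (imp b (a ⊓ b)) = one := by
    rw [NelsonAlgebra.imp_imp]; exact NelsonAlgebra.imp_self _
  exact hM.2 b (a ⊓ b) hb (mem_of_imp_one hM h ha)

lemma imp_mem_of_mem (hM : IsDeductiveSystem M) {m : N} (hm : m ∈ M) (x : N) :
    imp x m ∈ M := by
  have h : imp m (imp x m) = one := by
    rw [NelsonAlgebra.imp_imp]
    exact master (inf_le_left.trans le_sup_right)
  exact mem_of_imp_one hM h hm

/-- The deduction property: deductive systems are closed under the
"internal" modus ponens relative to any fixed `x`. -/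
lemma deduction (hM : IsDeductiveSystem M) {x z w : N}
    (hA : imp x z ∈ M) (hB : imp x (imp z w) ∈ M) : imp x w ∈ M := by
  have hb : imp x z ⊓ imp x (imp z w) ∈ M := inf_mem hM hA hB
  have htq : tilde x ≤ tilde (x ⊓ z) := by
    rw [tilde_inf_s10]; exact le_sup_left
  -- the key meet decomposition
  have hxA : x ⊓ imp x z = (x ⊓ tilde x) ⊔ (x ⊓ z) := by
    rw [NelsonAlgebra.inf_imp, inf_sup_left]
  have hBxt : imp x (imp z w) ⊓ (x ⊓ tilde x) = x ⊓ tilde x := by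
    refine le_antisymm inf_le_right (le_inf ?_ le_rfl)
    have h1 : x ⊓ tilde x ≤ x ⊓ imp x (imp z w) := by
      rw [NelsonAlgebra.inf_imp]
      exact le_inf inf_le_left (inf_le_right.trans le_sup_left)
    exact h1.trans inf_le_right
  have hBq : imp x (imp z w) ⊓ (x ⊓ z) =
      ((x ⊓ z) ⊓ tilde (x ⊓ z)) ⊔ ((x ⊓ z) ⊓ w) := by
    rw [NelsonAlgebra.imp_imp, inf_comm, NelsonAlgebra.inf_imp, inf_sup_left]
  have key : (imp x z ⊓ imp x (imp z w)) ⊓ x =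
      (x ⊓ tilde x) ⊔ (((x ⊓ z) ⊓ tilde (x ⊓ z)) ⊔ ((x ⊓ z) ⊓ w)) := by
    calc (imp x z ⊓ imp x (imp z w)) ⊓ x
        = imp x (imp z w) ⊓ (x ⊓ imp x z) := by
          rw [inf_comm (imp x z) (imp x (imp z w)), inf_assoc,
            inf_comm (imp x z) x]
      _ = imp x (imp z w) ⊓ ((x ⊓ tilde x) ⊔ (x ⊓ z)) := by rw [hxA]
      _ = imp x (imp z w) ⊓ (x ⊓ tilde x) ⊔ imp x (imp z w) ⊓ (x ⊓ z) :=
          inf_sup_left _ _ _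
      _ = (x ⊓ tilde x) ⊔ (((x ⊓ z) ⊓ tilde (x ⊓ z)) ⊔ ((x ⊓ z) ⊓ w)) := by
          rw [hBxt, hBq]
  -- the crucial inequality s ≤ ~s ⊔ w
  have hle : (imp x z ⊓ imp x (imp z w)) ⊓ x ≤
      tilde ((imp x z ⊓ imp x (imp z w)) ⊓ x) ⊔ w := by
    rw [key, tilde_sup, tilde_sup]
    have h1 : x ⊓ tilde x ≤
        tilde (x ⊓ tilde x) ⊓
          (tilde ((x ⊓ z) ⊓ tilde (x ⊓ z)) ⊓ tilde ((x ⊓ z) ⊓ w)) := by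
      refine le_inf ?_ (le_inf ?_ ?_)
      · rw [tilde_inf_s10 x (tilde x), tilde_tilde x]
        exact inf_le_right.trans le_sup_left
      · rw [tilde_inf_s10 (x ⊓ z) (tilde (x ⊓ z))]
        exact (inf_le_right.trans htq).trans le_sup_left
      · rw [tilde_inf_s10 (x ⊓ z) w]
        exact (inf_le_right.trans htq).trans le_sup_left
    have h2 : (x ⊓ z) ⊓ tilde (x ⊓ z) ≤
        tilde (x ⊓ tilde x) ⊓
          (tilde ((x ⊓ z) ⊓ tilde (x ⊓ z)) ⊓ tilde ((x ⊓ z) ⊓ w)) := by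
      refine le_inf ?_ (le_inf ?_ ?_)
      · rw [tilde_inf_s10 x (tilde x), tilde_tilde x]
        exact ((inf_le_left.trans inf_le_left).trans le_sup_right)
      · rw [tilde_inf_s10 (x ⊓ z) (tilde (x ⊓ z))]
        exact inf_le_right.trans le_sup_left
      · rw [tilde_inf_s10 (x ⊓ z) w]
        exact inf_le_right.trans le_sup_left
    refine sup_le (h1.trans le_sup_left) (sup_le (h2.trans le_sup_left) ?_)
    exact inf_le_right.trans le_sup_right
  have h1 : imp ((imp x z ⊓ imp x (imp z w)) ⊓ x) w = one := master hle
  have h2 : imp (imp x z ⊓ imp x (imp z w)) (imp x w) = one := by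
    rw [NelsonAlgebra.imp_imp]; exact h1
  exact mem_of_imp_one hM h2 hb

end NelsonAux

theorem maximal_imp_mem {N : Type*} [NelsonAlgebra N] (M : Set N)
    (hM : IsDeductiveSystem M) (hproper : M ≠ Set.univ)
    (hmax : ∀ D : Set N, IsDeductiveSystem D → D ≠ Set.univ → M ⊆ D → M = D)
    (x : N) (hx : x ∉ M) : ∀ y : N, imp x y ∈ M := by
  intro y
  classical
  let D : Set N := {v : N | imp x v ∈ M}
  have hD : IsDeductiveSystem D := by
    constructor
    · show imp x one ∈ M
      rw [NelsonAux.imp_one]; exact hM.1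
    · intro z w hz hw
      exact NelsonAux.deduction hM hz hw
  have hMD : M ⊆ D := fun m hm => NelsonAux.imp_mem_of_mem hM hm x
  have hxD : x ∈ D := by
    show imp x x ∈ M
    rw [NelsonAlgebra.imp_self]; exact hM.1
  by_cases hu : D = Set.univ
  · have : y ∈ D := hu ▸ Set.mem_univ y
    exact this
  · exact absurd (by rw [hmax D hD hu hMD]; exact hxD : x ∈ M) hx
end
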